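/- Let $\{Z_t\}_{t\ge 0}$ be a real sequence with $Z_0 = 0$. Suppose there exist an integer $t_0 > 0$ and real constants $\theta > 0$, $\delta_{\max} > 0$, and $0 < \zeta \le \delta_{\max}$ such that for all $t \ge 0$: $|Z_{t+1} - Z_t| \le \delta_{\max}$, and whenever $Z_t \ge \theta$ one has $Z_{t+t_0} - Z_t \le -t_0\zeta$. Then for all $t \ge 0$, $Z_t \le \theta + t_0\delta_{\max} + t_0 \frac{4\delta_{\max}^2}{\zeta}\log\left(\frac{8\delta_{\max}^2}{\zeta^2}\right)$. -/

import Mathlib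

/-!
The sequence never even exceeds `θ + t₀ δ`. For `t ≥ t₀` look back to `s = t - t₀`.
If `Z s ≥ θ`, the drift condition gives `Z t ≤ Z s`, and `Z s` is bounded by induction;
otherwise `Z s < θ` and `t₀` steps of size at most `δ` reach at most `θ + t₀ δ`.
The logarithmic term is nonnegative because `ζ ≤ δ`.
-/

section Drift

variable {Z : ℕ → ℝ} {δ : ℝ}

theorem le_add_mul_of_succ_le_add (hstep : ∀ t, Z (t + 1) ≤ Z t + δ) (s n : ℕ) :
    Z (s + n) ≤ Z s + n * δ := by
  induction n with
  | zero => simp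
  | succ n ih =>
    rw [← add_assoc]
    push_cast
    linarith [hstep (s + n)]

theorem le_add_mul_of_drift {θ : ℝ} {t0 : ℕ} (ht0 : 0 < t0) (hδ : 0 ≤ δ) (h0 : Z 0 ≤ θ)
    (hstep : ∀ t, Z (t + 1) ≤ Z t + δ) (hdrift : ∀ t, θ ≤ Z t → Z (t + t0) ≤ Z t) (t : ℕ) :
    Z t ≤ θ + t0 * δ := by
  induction t using Nat.strong_induction_on with
  | _ t ih =>
    rcases lt_or_ge t t0 with ht | ht
    · have hgrow := le_add_mul_of_succ_le_add hstep 0 t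
      rw [zero_add] at hgrow
      have : (t : ℝ) * δ ≤ t0 * δ := by gcongr
      linarith
    · obtain ⟨s, rfl⟩ : ∃ s, t = s + t0 := ⟨t - t0, by omega⟩
      rcases le_or_gt θ (Z s) with hs | hs
      · exact (hdrift s hs).trans (ih s (by omega))
      · linarith [le_add_mul_of_succ_le_add hstep s t0]

end Drift

theorem drift_lemma_general (Z : ℕ → ℝ) (hZ0 : Z 0 = 0) (t0 : ℕ) (ht0 : 0 < t0)
    (θ δmax ζ : ℝ) (hθ : 0 < θ) (hζ0 : 0 < ζ) (hζδ : ζ ≤ δmax)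
    (hstep : ∀ t : ℕ, |Z (t + 1) - Z t| ≤ δmax)
    (hdrift : ∀ t : ℕ, θ ≤ Z t → Z (t + t0) - Z t ≤ -(t0 : ℝ) * ζ) :
    ∀ t : ℕ, Z t ≤ θ + (t0 : ℝ) * δmax +
      (t0 : ℝ) * (4 * δmax ^ 2 / ζ) * Real.log (8 * δmax ^ 2 / ζ ^ 2) := by
  intro t
  have hbound : Z t ≤ θ + t0 * δmax := by
    refine le_add_mul_of_drift ht0 (by linarith) (by linarith) (fun t ↦ ?_) (fun t ht ↦ ?_) t
    · linarith [(abs_le.mp (hstep t)).2]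
    · have : 0 ≤ (t0 : ℝ) * ζ := by positivity
      linarith [hdrift t ht]
  have hlog : 0 ≤ Real.log (8 * δmax ^ 2 / ζ ^ 2) := by
    refine Real.log_nonneg ((one_le_div (by positivity)).mpr ?_)
    nlinarith
  have : 0 ≤ (t0 : ℝ) * (4 * δmax ^ 2 / ζ) * Real.log (8 * δmax ^ 2 / ζ ^ 2) := by positivity
  linarith

theorem drift_lemma (Z : ℕ → ℝ) (hZ0 : Z 0 = 0) (t0 : ℕ) (ht0 : 0 < t0)
    (θ δmax ζ : ℝ) (hθ : 0 < θ) (hδ : 0 < δmax) (hζ0 : 0 < ζ) (hζδ : ζ ≤ δmax)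
    (hstep : ∀ t : ℕ, |Z (t + 1) - Z t| ≤ δmax)
    (hdrift : ∀ t : ℕ, θ ≤ Z t → Z (t + t0) - Z t ≤ -(t0 : ℝ) * ζ) :
    ∀ t : ℕ, Z t ≤ θ + (t0 : ℝ) * δmax +
      (t0 : ℝ) * (4 * δmax ^ 2 / ζ) * Real.log (8 * δmax ^ 2 / ζ ^ 2) :=
  drift_lemma_general Z hZ0 t0 ht0 θ δmax ζ hθ hζ0 hζδ hstep hdrift
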